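/- arXiv:2512.11762 — 2 statements merged into one kernel-verified Lean document; each statement's English description precedes it below -/
import Mathlib

section
/- Every relative monad over Set is uniquely strong: if J : A → Set is a functor and (T, η, (-)*) is a J-relative monad on Set, then the maps (-)† : Set(X × J A, T B) → Set(X × T A, T B) defined by f†(x, u) = (fun a => f (x, a))* u give T the structure of a strong J-relative monad, i.e., they are natural in X and satisfy the three strong relative monad laws. -/
open CategoryTheory

/-! Over `Type u` a map `X × J a → T b` is an `X`-indexed family of maps `J a → T b`, so it can
be extended pointwise in the context: `f† (x, u) = (f (x, -))* u`. Each strong law is then the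
corresponding relative monad law evaluated at a fixed `x`. -/

section StrongExt

universe u

variable {A : Type*} [Category A] {J : A ⥤ Type u} {T : A → Type u}
  (ext : ∀ {a b : A}, (J.obj a ⟶ T b) → (T a ⟶ T b))

def strongExt {X : Type u} {a b : A} (f : X × J.obj a → T b) : X × T a → T b :=
  fun p => ext (TypeCat.ofHom fun j => f (p.1, j)) p.2

theorem strongExt_map_context {X X' : Type u} {a b : A} (g : X' → X) (f : X × J.obj a → T b)
    (p : X' × T a) :
    strongExt ext f (g p.1, p.2) = strongExt ext (fun q => f (g q.1, q.2)) p :=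
  rfl

theorem strongExt_unit_left {η : ∀ a : A, J.obj a ⟶ T a} (law1 : ∀ a : A, ext (η a) = 𝟙 (T a))
    {X : Type u} {a : A} (p : X × T a) :
    strongExt ext (fun q : X × J.obj a => η a q.2) p = p.2 := by
  simp [strongExt, law1]

theorem strongExt_unit_right {η : ∀ a : A, J.obj a ⟶ T a}
    (law2 : ∀ {a b : A} (f : J.obj a ⟶ T b), η a ≫ ext f = f)
    {X : Type u} {a b : A} (f : X × J.obj a → T b) (x : X) (j : J.obj a) :
    strongExt ext f (x, η a j) = f (x, j) :=
  congrArg (fun h => h j) (law2 (TypeCat.ofHom fun j => f (x, j)))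

theorem strongExt_assoc
    (law3 : ∀ {a b c : A} (f : J.obj a ⟶ T b) (g : J.obj b ⟶ T c),
      ext f ≫ ext g = ext (f ≫ ext g))
    {X Y : Type u} {a b c : A} (f : X × J.obj a → T b) (g : Y × J.obj b → T c)
    (p : (Y × X) × T a) :
    strongExt ext g (p.1.1, strongExt ext f (p.1.2, p.2)) =
      strongExt ext (fun q : (Y × X) × J.obj a => strongExt ext g (q.1.1, f (q.1.2, q.2))) p :=
  congrArg (fun h => h p.2)
    (law3 (TypeCat.ofHom fun j => f (p.1.2, j)) (TypeCat.ofHom fun j => g (p.1.1, j)))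

end StrongExt

/-- every relative monad over `Set` (here: `Type u`) is strong,
via `f† (x, u) = (fun a => f (x, a))* u`: these maps are natural in the context
`X` and satisfy the three strong relative monad laws (with respect to the
Cartesian structure of `Type u`, whose monoidal unit is `PUnit`). -/
theorem relativeMonad_over_Set_is_strong
    {A : Type*} [Category A] (J : A ⥤ Type u)
    (T : A → Type u) (η : ∀ a : A, J.obj a ⟶ T a)
    (ext : ∀ {a b : A}, (J.obj a ⟶ T b) → (T a ⟶ T b))
    (law1 : ∀ a : A, ext (η a) = 𝟙 (T a))
    (law2 : ∀ {a b : A} (f : J.obj a ⟶ T b), η a ≫ ext f = f)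
    (law3 : ∀ {a b c : A} (f : J.obj a ⟶ T b) (g : J.obj b ⟶ T c),
      ext f ≫ ext g = ext (f ≫ ext g))
    -- `sext` is the induced strong extension `f† (x, u) = (f (x, -))* u`
    (sext : ∀ (X : Type u) (a b : A), (X × J.obj a → T b) → (X × T a → T b))
    (hsext : ∀ (X : Type u) (a b : A) (f : X × J.obj a → T b) (p : X × T a),
      sext X a b f p = ext (TypeCat.ofHom (fun j => f (p.1, j))) p.2) :
    -- naturality in the context `X`
    (∀ (X X' : Type u) (a b : A) (g : X' → X) (f : X × J.obj a → T b)
        (p : X' × T a),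
        sext X a b f (g p.1, p.2) = sext X' a b (fun q => f (g q.1, q.2)) p) ∧
    -- left unit law `(η_A ∘ λ)† = λ`
    (∀ (a : A) (p : PUnit.{u + 1} × T a),
        sext PUnit a a (fun q : PUnit.{u + 1} × J.obj a => η a q.2) p = p.2) ∧
    -- right unit law `f† ∘ (X × η_A) = f`
    (∀ (X : Type u) (a b : A) (f : X × J.obj a → T b) (x : X) (j : J.obj a),
        sext X a b f (x, η a j) = f (x, j)) ∧
    -- associativity law `g† ∘ (Δ × f†) ∘ α = (g† ∘ (Δ × f) ∘ α)†`
    (∀ (X Y : Type u) (a b c : A) (f : X × J.obj a → T b)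
        (g : Y × J.obj b → T c) (p : (Y × X) × T a),
        sext Y b c g (p.1.1, sext X a b f (p.1.2, p.2)) =
          sext (Y × X) a c
            (fun q : (Y × X) × J.obj a => sext Y b c g (q.1.1, f (q.1.2, q.2)))
            p) := by
  obtain rfl : sext = fun X a b => strongExt ext := by
    funext X a b f p
    exact hsext X a b f p
  exact ⟨fun _ _ _ _ => strongExt_map_context ext, fun _ => strongExt_unit_left ext law1,
    fun _ _ _ => strongExt_unit_right ext law2, fun _ _ _ _ _ => strongExt_assoc ext law3⟩
end

section
/- A strong J-relative monad has an underlying J-relative monad: given a strong J-relative monad (T, η, (-)*) on a monoidal category C, the operation f ↦ (f ∘ λ_{J A})* ∘ λ⁻¹_{T A} for f : J A ⟶ T B (precomposing with the left unitor at the monoidal unit) defines an extension operation making (T, η) a J-relative monad satisfying the three (non-strong) relative monad laws. -/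
open CategoryTheory MonoidalCategory

/-- a strong `J`-relative monad on a symmetric monoidal category
has an underlying `J`-relative monad, with extension
`f ↦ (f ∘ λ_{J A})* ∘ λ⁻¹_{T A}`. -/
theorem strongRelativeMonad_underlying_relativeMonad
    {A : Type*} {C : Type*} [Category C] [MonoidalCategory C]
    [SymmetricCategory C]
    (J : A → C) (T : A → C) (η : ∀ a : A, J a ⟶ T a)
    (ext : ∀ (Γ : C) (a b : A), (Γ ⊗ J a ⟶ T b) → (Γ ⊗ T a ⟶ T b))
    -- naturality of the extension in the context `Γ`
    (hnat : ∀ (Γ Γ' : C) (a b : A) (h : Γ' ⟶ Γ) (f : Γ ⊗ J a ⟶ T b),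
      (h ▷ T a) ≫ ext Γ a b f = ext Γ' a b ((h ▷ J a) ≫ f))
    -- left unit law
    (slaw1 : ∀ a : A,
      ext (𝟙_ C) a a ((λ_ (J a)).hom ≫ η a) = (λ_ (T a)).hom)
    -- right unit law
    (slaw2 : ∀ (Γ : C) (a b : A) (f : Γ ⊗ J a ⟶ T b),
      (Γ ◁ η a) ≫ ext Γ a b f = f)
    -- associativity law
    (slaw3 : ∀ (Γ Δ : C) (a b c : A) (f : Γ ⊗ J a ⟶ T b)
        (g : Δ ⊗ J b ⟶ T c),
      (α_ Δ Γ (T a)).hom ≫ (Δ ◁ ext Γ a b f) ≫ ext Δ b c g =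
        ext (Δ ⊗ Γ) a c
          ((α_ Δ Γ (J a)).hom ≫ (Δ ◁ f) ≫ ext Δ b c g)) :
    -- the underlying extension `f ↦ (f ∘ λ_{J A})* ∘ λ⁻¹_{T A}` satisfies the
    -- three (non-strong) relative monad laws:
    ∀ uext : ∀ (a b : A), (J a ⟶ T b) → (T a ⟶ T b),
      (uext = fun a b f =>
        (λ_ (T a)).inv ≫ ext (𝟙_ C) a b ((λ_ (J a)).hom ≫ f)) →
      ((∀ a : A, uext a a (η a) = 𝟙 (T a)) ∧
      (∀ (a b : A) (f : J a ⟶ T b), η a ≫ uext a b f = f) ∧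
      (∀ (a b c : A) (f : J a ⟶ T b) (g : J b ⟶ T c),
        uext a b f ≫ uext b c g = uext a c (f ≫ uext b c g))) := by
  rintro uext rfl
  refine ⟨fun a => ?_, fun a b f => ?_, fun a b c f g => ?_⟩
  · simp [slaw1]
  · have h : η a ≫ (λ_ (T a)).inv = (λ_ (J a)).inv ≫ (𝟙_ C ◁ η a) := by simp
    simp only [reassoc_of% h, slaw2]
    simp
  · simp only
    -- LHS
    have key := slaw3 (𝟙_ C) (𝟙_ C) a b c ((λ_ (J a)).hom ≫ f)
      ((λ_ (J b)).hom ≫ g)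
    rw [Category.assoc]
    set F := ext (𝟙_ C) a b ((λ_ (J a)).hom ≫ f) with hF
    set G := ext (𝟙_ C) b c ((λ_ (J b)).hom ≫ g) with hG
    have nat : F ≫ (λ_ (T b)).inv = (λ_ (𝟙_ C ⊗ T a)).inv ≫ (𝟙_ C ◁ F) :=
      (leftUnitor_inv_naturality F).symm ▸ (leftUnitor_inv_naturality F)
    calc (λ_ (T a)).inv ≫ F ≫ (λ_ (T b)).inv ≫ G
        = (λ_ (T a)).inv ≫ (λ_ (𝟙_ C ⊗ T a)).inv ≫
            ((α_ (𝟙_ C) (𝟙_ C) (T a)).inv ≫ (α_ (𝟙_ C) (𝟙_ C) (T a)).hom) ≫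
            (𝟙_ C ◁ F) ≫ G := by
          rw [reassoc_of% nat]
          simp only [Iso.inv_hom_id, Category.id_comp]
      _ = (λ_ (T a)).inv ≫ (λ_ (𝟙_ C ⊗ T a)).inv ≫
            (α_ (𝟙_ C) (𝟙_ C) (T a)).inv ≫
            ext (𝟙_ C ⊗ 𝟙_ C) a c
              ((α_ (𝟙_ C) (𝟙_ C) (J a)).hom ≫ (𝟙_ C ◁ ((λ_ (J a)).hom ≫ f)) ≫ G) := by
          rw [Category.assoc, key]
      _ = (λ_ (T a)).inv ≫ ((λ_ (𝟙_ C)).inv ▷ T a) ≫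
            ext (𝟙_ C ⊗ 𝟙_ C) a c
              ((α_ (𝟙_ C) (𝟙_ C) (J a)).hom ≫ (𝟙_ C ◁ ((λ_ (J a)).hom ≫ f)) ≫ G) := by
          congr 1
          rw [← Category.assoc]
          congr 1
          monoidal_coherence
      _ = (λ_ (T a)).inv ≫ ext (𝟙_ C) a c
            (((λ_ (𝟙_ C)).inv ▷ J a) ≫
              (α_ (𝟙_ C) (𝟙_ C) (J a)).hom ≫ (𝟙_ C ◁ ((λ_ (J a)).hom ≫ f)) ≫ G) := by
          rw [hnat]
      _ = (λ_ (T a)).inv ≫ ext (𝟙_ C) a c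
            ((λ_ (J a)).hom ≫ f ≫ (λ_ (T b)).inv ≫ G) := by
          congr 2
          have h1 : ((λ_ (𝟙_ C)).inv ▷ J a) ≫ (α_ (𝟙_ C) (𝟙_ C) (J a)).hom =
              (λ_ (𝟙_ C ⊗ J a)).inv := by monoidal_coherence
          rw [reassoc_of% h1, ← leftUnitor_inv_naturality_assoc]
          simp only [Category.assoc]
end
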